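/- Let a group Γ act by isometries on a geodesic metric space X, and suppose there is a constant c₁ ≥ 1 such that every ball of radius 1 in X meets at most c₁ of the translates γF (γ ∈ Γ) of a fundamental set F, and such that translates meeting a common point make the corresponding group elements differ by an element of S = {γ : γF ∩ F ≠ ∅}. Then for every γ ∈ Γ, the word length of γ with respect to S satisfies w_S(γ) ≤ c₁ (d(x₀, γ·x₀) + 1), where x₀ ∈ F. -/

import Mathlib

open Pointwise Metric

/-!
Join `x₀` to `γ • x₀` by a geodesic `K` of length `D`. The translates `g • F ∩ K` form a finite
closed cover of the connected set `K`, so their intersection graph is connected; a path in it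
from `1` to `γ` visits distinct translates, and consecutive ones `g • F`, `h • F` meet, i.e.
`g⁻¹ * h ∈ S`. Hence `γ` is a product of fewer elements of `S` than there are translates meeting
`K`, and since `K` is covered by `⌊D⌋ + 1` unit balls there are at most `c₁ (D + 1)` of them.
-/

namespace SimpleGraph

def intersectionGraph {ι X : Type*} (V : ι → Set X) : SimpleGraph ι where
  Adj i j := i ≠ j ∧ (V i ∩ V j).Nonempty
  symm := ⟨fun _ _ h => ⟨h.1.symm, Set.inter_comm .. ▸ h.2⟩⟩
  loopless := ⟨fun _ h => h.1 rfl⟩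

@[simp]
theorem intersectionGraph_adj {ι X : Type*} {V : ι → Set X} {i j : ι} :
    (intersectionGraph V).Adj i j ↔ i ≠ j ∧ (V i ∩ V j).Nonempty :=
  Iff.rfl

namespace intersectionGraph

variable {ι X : Type*} {V : ι → Set X}

theorem nonempty_of_mem_support {a b : ι} (w : (intersectionGraph V).Walk a b)
    (hb : (V b).Nonempty) {i : ι} (hi : i ∈ w.support) : (V i).Nonempty := by
  rcases Walk.mem_support_iff_exists_mem_edges.1 hi with rfl | ⟨e, he, hie⟩
  · exact hb
  · obtain ⟨j, rfl⟩ := Sym2.mem_iff_exists.1 hie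
    exact (intersectionGraph_adj.1 (w.adj_of_mem_edges he)).2.mono Set.inter_subset_left

theorem exists_walk_length_lt_ncard (hfin : {i | (V i).Nonempty}.Finite) {a b : ι}
    (hab : (intersectionGraph V).Reachable a b) (hb : (V b).Nonempty) :
    ∃ w : (intersectionGraph V).Walk a b, w.length < {i | (V i).Nonempty}.ncard := by
  classical
  obtain ⟨w⟩ := hab
  refine ⟨w.toPath, ?_⟩
  have hsub : (↑(w.toPath : (intersectionGraph V).Walk a b).support.toFinset : Set ι) ⊆
      {i | (V i).Nonempty} := fun i hi =>
    nonempty_of_mem_support _ hb (List.mem_toFinset.1 hi)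
  have := Set.ncard_le_ncard hsub hfin
  rwa [Set.ncard_coe_finset, List.toFinset_card_of_nodup w.toPath.2.support_nodup,
    Walk.length_support] at this

theorem reachable_of_isPreconnected [TopologicalSpace X] (hV : ∀ i, IsClosed (V i))
    (hfin : {i | (V i).Nonempty}.Finite) (hconn : IsPreconnected (⋃ i, V i)) {a b : ι}
    (ha : (V a).Nonempty) (hb : (V b).Nonempty) : (intersectionGraph V).Reachable a b := by
  by_contra hab
  set R := {i | (intersectionGraph V).Reachable a i}
  set N := {i | (V i).Nonempty}
  have hclosed : ∀ s : Set ι, IsClosed (⋃ i ∈ s ∩ N, V i) := fun s =>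
    (hfin.inter_of_right s).isClosed_biUnion fun i _ => hV i
  have hcover : (⋃ i, V i) ⊆ (⋃ i ∈ R ∩ N, V i) ∪ ⋃ i ∈ Rᶜ ∩ N, V i := by
    refine Set.iUnion_subset fun i x hx => ?_
    by_cases hi : i ∈ R
    · exact Or.inl (Set.mem_biUnion ⟨hi, x, hx⟩ hx)
    · exact Or.inr (Set.mem_biUnion ⟨hi, x, hx⟩ hx)
  obtain ⟨x, -, hxR, hxR'⟩ := isPreconnected_closed_iff.1 hconn _ _ (hclosed R) (hclosed Rᶜ)
    hcover (ha.mono fun x hx => ⟨Set.mem_iUnion.2 ⟨a, hx⟩, Set.mem_biUnion ⟨.rfl, ha⟩ hx⟩)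
    (hb.mono fun x hx => ⟨Set.mem_iUnion.2 ⟨b, hx⟩, Set.mem_biUnion ⟨hab, hb⟩ hx⟩)
  obtain ⟨i, ⟨hi, -⟩, hxi⟩ := Set.mem_iUnion₂.1 hxR
  obtain ⟨j, ⟨hj, -⟩, hxj⟩ := Set.mem_iUnion₂.1 hxR'
  have hij : i ≠ j := fun h => hj (h ▸ hi)
  exact hj (hi.trans (Adj.reachable (intersectionGraph_adj.2 ⟨hij, x, hxi, hxj⟩)))

end intersectionGraph

theorem Walk.exists_list_prod_eq {Γ : Type*} [Group Γ] {G : SimpleGraph Γ} {S : Set Γ}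
    (hG : ∀ g h, G.Adj g h → g⁻¹ * h ∈ S) {a b : Γ} (w : G.Walk a b) :
    ∃ l : List Γ, (∀ s ∈ l, s ∈ S) ∧ l.prod = a⁻¹ * b ∧ l.length = w.length := by
  induction w with
  | nil => exact ⟨[], by simp, by simp, rfl⟩
  | @cons u v _ huv _ ih =>
    obtain ⟨l, hlS, hprod, hlen⟩ := ih
    refine ⟨(u⁻¹ * v) :: l, ?_, by simp [hprod, mul_assoc], by simp [hlen]⟩
    simpa using ⟨hG u v huv, hlS⟩

end SimpleGraph

section Translates

variable {Γ X : Type*} [Group Γ] [MulAction Γ X]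

theorem exists_list_prod_eq_of_isPreconnected [TopologicalSpace X] {F K : Set X}
    (hF : ∀ g : Γ, IsClosed (g • F)) (hK : IsPreconnected K) (hKclosed : IsClosed K)
    (hcover : K ⊆ ⋃ g : Γ, g • F) (hfin : {g : Γ | (g • F ∩ K).Nonempty}.Finite) {a b : Γ}
    (ha : (a • F ∩ K).Nonempty) (hb : (b • F ∩ K).Nonempty) :
    ∃ l : List Γ, (∀ s ∈ l, (s • F ∩ F).Nonempty) ∧ l.prod = a⁻¹ * b ∧
      l.length < {g : Γ | (g • F ∩ K).Nonempty}.ncard := by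
  have hunion : ⋃ g : Γ, g • F ∩ K = K := by
    rw [← Set.iUnion_inter]
    exact Set.inter_eq_right.2 hcover
  obtain ⟨w, hw⟩ := SimpleGraph.intersectionGraph.exists_walk_length_lt_ncard hfin
    (SimpleGraph.intersectionGraph.reachable_of_isPreconnected (fun g => (hF g).inter hKclosed)
      hfin (by rwa [hunion]) ha hb) hb
  have hadj : ∀ g h : Γ, (SimpleGraph.intersectionGraph fun g : Γ => g • F ∩ K).Adj g h →
      g⁻¹ * h ∈ {s : Γ | (s • F ∩ F).Nonempty} := by
    intro g h hgh
    have := ((SimpleGraph.intersectionGraph_adj.1 hgh).2.mono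
      (Set.inter_subset_inter Set.inter_subset_left Set.inter_subset_left)).smul_set (a := g⁻¹)
    rwa [Set.smul_set_inter, inv_smul_smul, smul_smul, Set.inter_comm] at this
  obtain ⟨l, hlS, hprod, hlen⟩ := SimpleGraph.Walk.exists_list_prod_eq hadj w
  exact ⟨l, hlS, hprod, hlen ▸ hw⟩

theorem finite_and_ncard_setOf_inter_nonempty_le {ι α : Type*} {U : ι → Set X} {K : Set X}
    {t : Finset α} {B : α → Set X} (hK : K ⊆ ⋃ j ∈ t, B j) {c : ℝ}
    (hB : ∀ j, {i | (U i ∩ B j).Nonempty}.Finite ∧ ({i | (U i ∩ B j).Nonempty}.ncard : ℝ) ≤ c) :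
    {i | (U i ∩ K).Nonempty}.Finite ∧ ({i | (U i ∩ K).Nonempty}.ncard : ℝ) ≤ t.card * c := by
  have hsub : {i | (U i ∩ K).Nonempty} ⊆ ⋃ j ∈ t, {i | (U i ∩ B j).Nonempty} := by
    rintro i ⟨x, hxU, hxK⟩
    obtain ⟨j, hj, hxj⟩ := Set.mem_iUnion₂.1 (hK hxK)
    exact Set.mem_biUnion hj ⟨x, hxU, hxj⟩
  have hfin : (⋃ j ∈ t, {i | (U i ∩ B j).Nonempty}).Finite :=
    t.finite_toSet.biUnion fun j _ => (hB j).1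
  refine ⟨hfin.subset hsub, ?_⟩
  calc ({i | (U i ∩ K).Nonempty}.ncard : ℝ)
      ≤ (⋃ j ∈ t, {i | (U i ∩ B j).Nonempty}).ncard := by
        exact_mod_cast Set.ncard_le_ncard hsub hfin
    _ ≤ ∑ j ∈ t, ({i | (U i ∩ B j).Nonempty}.ncard : ℝ) := by
        exact_mod_cast t.set_ncard_biUnion_le _
    _ ≤ ∑ _j ∈ t, c := Finset.sum_le_sum fun j _ => (hB j).2
    _ = t.card * c := by simp

end Translates

theorem LipschitzWith.image_Icc_subset_biUnion_closedBall {X : Type*} [PseudoMetricSpace X]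
    {f : ℝ → X} (hf : LipschitzWith 1 f) (D : ℝ) :
    f '' Set.Icc 0 D ⊆ ⋃ j ∈ Finset.range (⌊D⌋₊ + 1), closedBall (f j) 1 := by
  rintro _ ⟨s, ⟨hs0, hsD⟩, rfl⟩
  refine Set.mem_biUnion (x := ⌊s⌋₊)
    (Finset.mem_range.2 (Nat.lt_succ_of_le (Nat.floor_le_floor hsD))) ?_
  calc dist (f s) (f ⌊s⌋₊) ≤ dist s ⌊s⌋₊ := by simpa using hf.dist_le_mul s ⌊s⌋₊
    _ ≤ 1 := by
      rw [Real.dist_eq, abs_of_nonneg (sub_nonneg.2 (Nat.floor_le hs0))]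
      linarith [Nat.lt_floor_add_one s]

theorem word_length_bound_general
    {X : Type*} [MetricSpace X] {Γ : Type*} [Group Γ] [MulAction Γ X]
    (hiso : ∀ (γ : Γ) (x y : X), dist (γ • x) (γ • y) = dist x y)
    (F : Set X) (hFclosed : IsClosed F)
    (hcover : ∀ x : X, ∃ γ : Γ, x ∈ γ • F)
    (x₀ : X) (hx₀ : x₀ ∈ F)
    (hgeo : ∀ x y : X, ∃ f : ℝ → X, f 0 = x ∧ f (dist x y) = y ∧
      ∀ s t : ℝ, dist (f s) (f t) ≤ |s - t|)
    (c₁ : ℝ)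
    (hball : ∀ x : X,
      ({γ : Γ | (γ • F ∩ Metric.closedBall x 1).Nonempty}).Finite ∧
      (({γ : Γ | (γ • F ∩ Metric.closedBall x 1).Nonempty}).ncard : ℝ) ≤ c₁)
    (S : Set Γ) (hS : S = {γ : Γ | (γ • F ∩ F).Nonempty})
    (γ : Γ) :
    ∃ l : List Γ, (∀ s ∈ l, s ∈ S) ∧ l.prod = γ ∧
      (l.length : ℝ) ≤ c₁ * (dist x₀ (γ • x₀) + 1) := by
  subst hS
  have : IsIsometricSMul Γ X := ⟨fun g => Isometry.of_dist_eq (hiso g)⟩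
  obtain ⟨f, hf0, hfD, hf⟩ := hgeo x₀ (γ • x₀)
  set D := dist x₀ (γ • x₀)
  have hfLip : LipschitzWith 1 f :=
    LipschitzWith.of_dist_le_mul fun s t => by simpa [Real.dist_eq] using hf s t
  obtain ⟨hfin, hcard⟩ := finite_and_ncard_setOf_inter_nonempty_le
    (U := fun g : Γ => g • F) (hfLip.image_Icc_subset_biUnion_closedBall D) fun j => hball _
  obtain ⟨l, hlS, hprod, hlen⟩ := exists_list_prod_eq_of_isPreconnected (a := 1) (b := γ)
    (fun g => hFclosed.smul g) (isPreconnected_Icc.image f hfLip.continuous.continuousOn)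
    (isCompact_Icc.image hfLip.continuous).isClosed (fun x _ => Set.mem_iUnion.2 (hcover x)) hfin
    ⟨x₀, by simpa using hx₀, 0, ⟨le_rfl, dist_nonneg⟩, hf0⟩
    ⟨γ • x₀, Set.smul_mem_smul_set hx₀, D, ⟨dist_nonneg, le_rfl⟩, hfD⟩
  have hc₁ : 0 ≤ c₁ := (Nat.cast_nonneg _).trans (hball x₀).2
  refine ⟨l, hlS, by simpa using hprod, ?_⟩
  calc (l.length : ℝ) ≤ {g : Γ | (g • F ∩ f '' Set.Icc 0 D).Nonempty}.ncard := by
        exact_mod_cast hlen.le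
    _ ≤ (Finset.range (⌊D⌋₊ + 1)).card * c₁ := hcard
    _ ≤ (D + 1) * c₁ := by
        gcongr
        simpa using Nat.floor_le (dist_nonneg : 0 ≤ D)
    _ = c₁ * (D + 1) := mul_comm ..

/-- the word-length lemma.  `Γ` acts by isometries on a geodesic
metric space `X` (geodesics are expressed by `hgeo`: any two points are joined by a
1-Lipschitz path parametrized by arclength), `F` is a closed fundamental set whose
translates cover `X`, `x₀ ∈ F`, every closed ball of radius 1 meets at most `c₁`
translates `γ • F`, and `S = {γ | γ•F ∩ F ≠ ∅}`.  Then every `γ ∈ Γ` is a product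
of at most `c₁·(d(x₀, γ·x₀) + 1)` elements of `S`; i.e.
`w_S(γ) ≤ c₁ (d(x₀, γ x₀) + 1)`. -/
theorem word_length_bound
    {X : Type*} [MetricSpace X] {Γ : Type*} [Group Γ] [MulAction Γ X]
    (hiso : ∀ (γ : Γ) (x y : X), dist (γ • x) (γ • y) = dist x y)
    (F : Set X) (hFclosed : IsClosed F)
    (hcover : ∀ x : X, ∃ γ : Γ, x ∈ γ • F)
    (x₀ : X) (hx₀ : x₀ ∈ F)
    (hgeo : ∀ x y : X, ∃ f : ℝ → X, f 0 = x ∧ f (dist x y) = y ∧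
      ∀ s t : ℝ, dist (f s) (f t) ≤ |s - t|)
    (c₁ : ℝ) (hc₁ : 1 ≤ c₁)
    (hball : ∀ x : X,
      ({γ : Γ | (γ • F ∩ Metric.closedBall x 1).Nonempty}).Finite ∧
      (({γ : Γ | (γ • F ∩ Metric.closedBall x 1).Nonempty}).ncard : ℝ) ≤ c₁)
    (S : Set Γ) (hS : S = {γ : Γ | (γ • F ∩ F).Nonempty})
    (γ : Γ) :
    ∃ l : List Γ, (∀ s ∈ l, s ∈ S) ∧ l.prod = γ ∧
      (l.length : ℝ) ≤ c₁ * (dist x₀ (γ • x₀) + 1) :=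
  word_length_bound_general hiso F hFclosed hcover x₀ hx₀ hgeo c₁ hball S hS γ
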